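/- Let β > 1 and let λ ∈ ℂ with 1/β < |λ| ≤ 1. Then the function F_λ : [0,1] → ℂ, F_λ(x) = Σ_{n=1}^∞ a_n(β,x)/(βλ)^n, is left-continuous at every simple point x ∈ (0,1] if and only if Σ_{n=1}^∞ a_n(β,1)/(βλ)^n = 1 (i.e. φ_β(λ^{−1}) = 1; by the paper's Theorem 2.7 this means exactly that λ is an isolated eigenvalue of the Perron–Frobenius operator of τ_β). -/

import Mathlib

open scoped BigOperators

/-- The beta-map `x ↦ βx - ⌊βx⌋`. -/
noncomputable def tau (β x : ℝ) : ℝ := β * x - ⌊β * x⌋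

/-- Greedy digit `a_n(β,x) = ⌊β·τ_β^{n-1}(x)⌋` (meaningful for `n ≥ 1`). -/
noncomputable def dig (β x : ℝ) (n : ℕ) : ℤ := ⌊β * (tau β)^[n - 1] x⌋

/-- `x` is a simple point for `β`: some `τ_β^{n-1}(x)` lies in `{1/β, …, ⌊β⌋/β}`. -/
def IsSimplePt (β x : ℝ) : Prop :=
  ∃ n : ℕ, 1 ≤ n ∧ ∃ k : ℕ, 1 ≤ k ∧ (k : ℤ) ≤ ⌊β⌋ ∧ (tau β)^[n - 1] x = (k : ℝ) / β

/-- `L(x)`: the least `n ≥ 1` with `τ_β^{n-1}(x) ∈ {1/β, …, ⌊β⌋/β}`. -/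
noncomputable def Lpt (β x : ℝ) : ℕ :=
  sInf {n : ℕ | 1 ≤ n ∧ ∃ k : ℕ, 1 ≤ k ∧ (k : ℤ) ≤ ⌊β⌋ ∧ (tau β)^[n - 1] x = (k : ℝ) / β}

/-- `β` is simple if `x = 1` is a simple point for `β`. -/
def IsSimpleBeta (β : ℝ) : Prop := IsSimplePt β 1

open Classical in
/-- Quasi-greedy digit `d_n(β,1)` (meaningful for `n ≥ 1`): if `β` is simple with `L = L(1)`,
the periodic sequence repeating the block `(a_1, …, a_{L-1}, a_L - 1)`; otherwise `a_n(β,1)`. -/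
noncomputable def qdig (β : ℝ) (n : ℕ) : ℤ :=
  if IsSimpleBeta β then
    (if (n - 1) % Lpt β 1 = Lpt β 1 - 1 then dig β 1 (Lpt β 1) - 1
     else dig β 1 ((n - 1) % Lpt β 1 + 1))
  else dig β 1 n

/-- `φ_β(z) = Σ_{n≥1} a_n(β,1) β^{-n} z^n`. -/
noncomputable def phi (β : ℝ) (z : ℂ) : ℂ :=
  ∑' n : ℕ, (dig β 1 (n + 1) : ℂ) * (z / (β : ℂ)) ^ (n + 1)

/-- `φ̂_β(z) = Σ_{n≥1} d_n(β,1) β^{-n} z^n`. -/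
noncomputable def phiHat (β : ℝ) (z : ℂ) : ℂ :=
  ∑' n : ℕ, (qdig β (n + 1) : ℂ) * (z / (β : ℂ)) ^ (n + 1)

/-- `ψ_β(z) = 1 + Σ_{n≥1} τ_β^n(1) β^{-n} z^n`. -/
noncomputable def psi (β : ℝ) (z : ℂ) : ℂ :=
  1 + ∑' n : ℕ, (((tau β)^[n + 1] 1 : ℝ) : ℂ) * (z / (β : ℂ)) ^ (n + 1)

/-- `F_λ(x) = Σ_{n≥1} a_n(β,x)/(βλ)^n`. -/
noncomputable def Ffun (β : ℝ) (lam : ℂ) (x : ℝ) : ℂ :=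
  ∑' n : ℕ, (dig β x (n + 1) : ℂ) / ((β : ℂ) * lam) ^ (n + 1)

/-!
As `y → x⁻`, the `τ_β`-orbit of `y` shadows the orbit of `x` under the left-continuous beta-map
`t ↦ βt - ⌈βt⌉ + 1`, so the digits of `y` converge to the quasi-greedy digits of `x`, and by
dominated convergence `F_λ(x⁻)` is the digit series of the quasi-greedy expansion of `x`.
For a simple point `x` whose orbit first hits some `k/β` at time `L - 1`, that expansion is the
greedy one with its last nonzero digit `a_L` lowered by one, followed by the quasi-greedy
expansion of `1`. Hence `F_λ(x⁻) - F_λ(x) = (βλ)^{-L} (F_λ(1⁻) - 1)`. The simple point `x = 1/β`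
shows that left-continuity at all simple points amounts to `F_λ(1⁻) = 1`, and the same identity
at `x = 1` (or `F_λ(1⁻) = F_λ(1)` when `1` is not simple) turns this into `F_λ(1) = 1`.
-/

open Filter Topology Set

/-- The left-continuous version of `τ_β`. -/
noncomputable def tauLeft (β t : ℝ) : ℝ := β * t - ⌈β * t⌉ + 1

/-- The quasi-greedy digits of `x`, which are the limits of `dig β y n` as `y → x⁻`. -/
noncomputable def digLeft (β x : ℝ) (n : ℕ) : ℤ := ⌈β * (tauLeft β)^[n - 1] x⌉ - 1

/-- `Ffun β lam x` is `digitSeries (β * lam) (dig β x)` by definition. -/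
noncomputable def digitSeries (z : ℂ) (c : ℕ → ℤ) : ℂ := ∑' n : ℕ, (c (n + 1) : ℂ) / z ^ (n + 1)

/-- The discontinuities `k/β` of `τ_β` in `(0, 1]`. -/
def IsJumpPt (β t : ℝ) : Prop := ∃ k : ℕ, 1 ≤ k ∧ (k : ℤ) ≤ ⌊β⌋ ∧ t = (k : ℝ) / β

section Orbits

variable {β : ℝ}

lemma iterate_tau_nonneg {x : ℝ} (hx : 0 ≤ x) : ∀ n, 0 ≤ (tau β)^[n] x
  | 0 => hx
  | n + 1 => by rw [Function.iterate_succ_apply']; exact Int.fract_nonneg _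

lemma iterate_tau_le_one {x : ℝ} (hx : x ≤ 1) : ∀ n, (tau β)^[n] x ≤ 1
  | 0 => hx
  | n + 1 => by rw [Function.iterate_succ_apply']; exact (Int.fract_lt_one _).le

lemma tauLeft_pos (β t : ℝ) : 0 < tauLeft β t := by
  unfold tauLeft; linarith [Int.ceil_lt_add_one (β * t)]

lemma tauLeft_le_one (β t : ℝ) : tauLeft β t ≤ 1 := by
  unfold tauLeft; linarith [Int.le_ceil (β * t)]

lemma iterate_tauLeft_pos {x : ℝ} (hx : 0 < x) : ∀ n, 0 < (tauLeft β)^[n] x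
  | 0 => hx
  | n + 1 => by rw [Function.iterate_succ_apply']; exact tauLeft_pos _ _

lemma iterate_tauLeft_le_one {x : ℝ} (hx : x ≤ 1) : ∀ n, (tauLeft β)^[n] x ≤ 1
  | 0 => hx
  | n + 1 => by rw [Function.iterate_succ_apply']; exact tauLeft_le_one _ _

lemma dig_succ_eq (β x : ℝ) (n : ℕ) :
    (dig β x (n + 1) : ℝ) = β * (tau β)^[n] x - (tau β)^[n + 1] x := by
  rw [Function.iterate_succ_apply']; simp [dig, tau]

lemma digLeft_succ_eq (β x : ℝ) (n : ℕ) :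
    (digLeft β x (n + 1) : ℝ) = β * (tauLeft β)^[n] x - (tauLeft β)^[n + 1] x := by
  rw [Function.iterate_succ_apply']
  simp only [digLeft, tauLeft, Nat.add_sub_cancel]
  push_cast
  ring

lemma norm_dig_le (hβ : 0 ≤ β) {x : ℝ} (hx0 : 0 ≤ x) (hx1 : x ≤ 1) (n : ℕ) :
    ‖(dig β x n : ℂ)‖ ≤ β := by
  have h0 := iterate_tau_nonneg (β := β) hx0 (n - 1)
  have h1 := iterate_tau_le_one (β := β) hx1 (n - 1)
  have hpos : 0 ≤ dig β x n := Int.floor_nonneg.2 (mul_nonneg hβ h0)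
  rw [Complex.norm_intCast, abs_of_nonneg (by exact_mod_cast hpos)]
  calc (dig β x n : ℝ) ≤ β * (tau β)^[n - 1] x := Int.floor_le _
    _ ≤ β := mul_le_of_le_one_right hβ h1

lemma norm_digLeft_le (hβ : 0 < β) {x : ℝ} (hx0 : 0 < x) (hx1 : x ≤ 1) (n : ℕ) :
    ‖(digLeft β x n : ℂ)‖ ≤ β := by
  have h0 := iterate_tauLeft_pos (β := β) hx0 (n - 1)
  have h1 := iterate_tauLeft_le_one (β := β) hx1 (n - 1)
  have hpos : 0 ≤ digLeft β x n :=
    Int.sub_nonneg_of_le (Int.ceil_pos.2 (mul_pos hβ h0))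
  rw [Complex.norm_intCast, abs_of_nonneg (by exact_mod_cast hpos)]
  calc (digLeft β x n : ℝ) ≤ β * (tauLeft β)^[n - 1] x := by
        simp only [digLeft, Int.cast_sub, Int.cast_one]
        linarith [Int.ceil_lt_add_one (β * (tauLeft β)^[n - 1] x)]
    _ ≤ β := mul_le_of_le_one_right hβ.le h1

lemma tau_sub_eq {t η : ℝ} (hη : 0 < β * η) (h : β * η ≤ tauLeft β t) :
    tau β (t - η) = tauLeft β t - β * η := by
  have hfloor : ⌊β * (t - η)⌋ = ⌈β * t⌉ - 1 := by
    rw [Int.floor_eq_iff]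
    unfold tauLeft at h
    push_cast
    constructor <;> linarith [Int.le_ceil (β * t)]
  simp only [tau, tauLeft, hfloor]
  push_cast
  ring

lemma eventually_iterate_tau_nhdsLT (hβ : 0 < β) (x : ℝ) (n : ℕ) :
    ∀ᶠ y in 𝓝[<] x, (tau β)^[n] y = (tauLeft β)^[n] x - β ^ n * (x - y) := by
  induction n with
  | zero => exact Eventually.of_forall fun y => by simp
  | succ n ih =>
    have hsmall : ∀ᶠ y in 𝓝 x, β * (β ^ n * (x - y)) < tauLeft β ((tauLeft β)^[n] x) :=
      ContinuousAt.eventually_lt (by fun_prop) continuousAt_const (by simpa using tauLeft_pos _ _)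
    filter_upwards [ih, self_mem_nhdsWithin, nhdsWithin_le_nhds hsmall] with y hy hyx hy'
    have hη : 0 < β * (β ^ n * (x - y)) := by
      have : 0 < x - y := sub_pos.2 hyx
      positivity
    rw [Function.iterate_succ_apply', Function.iterate_succ_apply', hy, tau_sub_eq hη hy'.le]
    ring

lemma eventually_dig_eq_digLeft (hβ : 0 < β) (x : ℝ) (n : ℕ) :
    ∀ᶠ y in 𝓝[<] x, dig β y (n + 1) = digLeft β x (n + 1) := by
  filter_upwards [eventually_iterate_tau_nhdsLT hβ x n,
    eventually_iterate_tau_nhdsLT hβ x (n + 1)] with y h h'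
  have : (dig β y (n + 1) : ℝ) = digLeft β x (n + 1) := by
    rw [dig_succ_eq, digLeft_succ_eq, h, h']
    ring
  exact_mod_cast this

end Orbits

section DigitSeries

variable {z : ℂ}

lemma summable_div_norm_pow (hz : 1 < ‖z‖) (B : ℝ) :
    Summable fun n : ℕ => B / ‖z‖ ^ (n + 1) := by
  have hr : ‖z‖⁻¹ < 1 := inv_lt_one_of_one_lt₀ hz
  refine ((summable_geometric_of_lt_one (by positivity) hr).mul_left (B * ‖z‖⁻¹)).congr
    fun n => ?_
  rw [inv_pow, pow_succ]
  field_simp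

lemma norm_div_pow_le {c : ℤ} {B : ℝ} (hc : ‖(c : ℂ)‖ ≤ B) (n : ℕ) :
    ‖(c : ℂ) / z ^ n‖ ≤ B / ‖z‖ ^ n := by
  rw [norm_div, norm_pow]
  exact div_le_div_of_nonneg_right hc (by positivity)

lemma summable_digitSeries (hz : 1 < ‖z‖) {c : ℕ → ℤ} {B : ℝ} (hc : ∀ n, ‖(c n : ℂ)‖ ≤ B) :
    Summable fun n : ℕ => (c (n + 1) : ℂ) / z ^ (n + 1) :=
  (summable_div_norm_pow hz B).of_norm_bounded fun _ => norm_div_pow_le (hc _) _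

lemma digitSeries_eq_sum_add (hz : 1 < ‖z‖) {c : ℕ → ℤ} {B : ℝ} (hc : ∀ n, ‖(c n : ℂ)‖ ≤ B)
    (L : ℕ) :
    digitSeries z c = ∑ n ∈ Finset.range L, (c (n + 1) : ℂ) / z ^ (n + 1)
      + digitSeries z (fun n => c (n + L)) / z ^ L := by
  rw [digitSeries, ← (summable_digitSeries hz hc).sum_add_tsum_nat_add L, digitSeries,
    ← tsum_div_const]
  congr 1
  refine tsum_congr fun n => ?_
  rw [Nat.add_right_comm n L 1, pow_add, div_div]

lemma tendsto_digitSeries {α : Type*} {l : Filter α} (hz : 1 < ‖z‖) {c : α → ℕ → ℤ}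
    {d : ℕ → ℤ} {B : ℝ} (hcd : ∀ n, ∀ᶠ a in l, c a (n + 1) = d (n + 1))
    (hc : ∀ᶠ a in l, ∀ n, ‖(c a n : ℂ)‖ ≤ B) :
    Tendsto (fun a => digitSeries z (c a)) l (𝓝 (digitSeries z d)) :=
  tendsto_tsum_of_dominated_convergence (summable_div_norm_pow hz B)
    (fun n => tendsto_nhds_of_eventually_eq <| (hcd n).mono fun a h => by rw [h])
    (hc.mono fun _ h _ => norm_div_pow_le (h _) _)

end DigitSeries

lemma tendsto_digitSeries_dig_nhdsLT {β : ℝ} (hβ : 0 < β) {z : ℂ} (hz : 1 < ‖z‖) {x : ℝ}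
    (hx0 : 0 < x) (hx1 : x ≤ 1) :
    Tendsto (fun y => digitSeries z (dig β y)) (𝓝[<] x) (𝓝 (digitSeries z (digLeft β x))) := by
  refine tendsto_digitSeries (B := β) hz (eventually_dig_eq_digLeft hβ x) ?_
  filter_upwards [Ioo_mem_nhdsLT hx0] with y hy
  exact norm_dig_le hβ.le hy.1.le (hy.2.le.trans hx1)

section SimplePoints

variable {β : ℝ}

lemma tauLeft_eq_tau_of_not_isJumpPt (hβ : 0 < β) {t : ℝ} (ht0 : 0 < t) (ht1 : t ≤ 1)
    (ht : ¬ IsJumpPt β t) : tauLeft β t = tau β t := by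
  have hfract : Int.fract (β * t) ≠ 0 := by
    intro h
    obtain ⟨m, hm⟩ := Int.fract_eq_zero_iff.1 h
    have hm0 : (0 : ℝ) < m := hm ▸ mul_pos hβ ht0
    lift m to ℕ using (by exact_mod_cast hm0.le)
    refine ht ⟨m, by exact_mod_cast hm0, Int.le_floor.2 ?_, ?_⟩
    · rw [hm]; exact mul_le_of_le_one_right hβ.le ht1
    · rw [eq_div_iff hβ.ne', mul_comm]; exact_mod_cast hm.symm
  rw [tauLeft, Int.ceil_eq_add_one_sub_fract hfract]
  change _ = Int.fract (β * t)
  ring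

lemma iterate_tauLeft_eq_iterate_tau (hβ : 0 < β) {x : ℝ} (hx0 : 0 < x) (hx1 : x ≤ 1) {n : ℕ}
    (h : ∀ m < n, ¬ IsJumpPt β ((tau β)^[m] x)) : (tauLeft β)^[n] x = (tau β)^[n] x := by
  induction n with
  | zero => rfl
  | succ n ih =>
    have ih := ih fun m hm => h m (by omega)
    rw [Function.iterate_succ_apply', Function.iterate_succ_apply', ih]
    exact tauLeft_eq_tau_of_not_isJumpPt hβ (ih ▸ iterate_tauLeft_pos hx0 n)
      (iterate_tau_le_one hx1 n) (h n n.lt_succ_self)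

lemma digLeft_succ_eq_dig_succ {x : ℝ} {m : ℕ} (h : (tauLeft β)^[m] x = (tau β)^[m] x)
    (h' : (tauLeft β)^[m + 1] x = (tau β)^[m + 1] x) :
    digLeft β x (m + 1) = dig β x (m + 1) := by
  have : (digLeft β x (m + 1) : ℝ) = dig β x (m + 1) := by
    rw [digLeft_succ_eq, dig_succ_eq, h, h']
  exact_mod_cast this

lemma digitSeries_digLeft_of_not_isSimplePt (hβ : 0 < β) {x : ℝ} (hx0 : 0 < x) (hx1 : x ≤ 1)
    (hs : ¬ IsSimplePt β x) (z : ℂ) : digitSeries z (digLeft β x) = digitSeries z (dig β x) := by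
  have horbit (n : ℕ) : (tauLeft β)^[n] x = (tau β)^[n] x :=
    iterate_tauLeft_eq_iterate_tau hβ hx0 hx1 fun m _ hm => hs ⟨m + 1, by omega, hm⟩
  exact tsum_congr fun n => by rw [digLeft_succ_eq_dig_succ (horbit n) (horbit (n + 1))]

lemma Lpt_spec {x : ℝ} (hs : IsSimplePt β x) :
    1 ≤ Lpt β x ∧ IsJumpPt β ((tau β)^[Lpt β x - 1] x) :=
  Nat.sInf_mem hs

lemma iterate_tauLeft_eq_of_lt_Lpt (hβ : 0 < β) {x : ℝ} (hx0 : 0 < x) (hx1 : x ≤ 1) {n : ℕ}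
    (hn : n < Lpt β x) : (tauLeft β)^[n] x = (tau β)^[n] x :=
  iterate_tauLeft_eq_iterate_tau hβ hx0 hx1 fun m hm h =>
    Nat.notMem_of_lt_sInf (show m + 1 < Lpt β x by omega) ⟨by omega, h⟩

lemma iterate_Lpt (hβ : 0 < β) {x : ℝ} (hx0 : 0 < x) (hx1 : x ≤ 1) (hs : IsSimplePt β x) :
    (tauLeft β)^[Lpt β x] x = 1 ∧ (tau β)^[Lpt β x] x = 0 := by
  obtain ⟨hL, k, -, -, hk⟩ := Lpt_spec hs
  have h := iterate_tauLeft_eq_of_lt_Lpt hβ hx0 hx1 (Nat.sub_lt hL one_pos)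
  rw [← Nat.sub_add_cancel hL, Function.iterate_succ_apply', Function.iterate_succ_apply', h, hk]
  simp [tauLeft, tau, mul_div_cancel₀ _ hβ.ne']

lemma digLeft_eq_dig_of_lt_Lpt (hβ : 0 < β) {x : ℝ} (hx0 : 0 < x) (hx1 : x ≤ 1) {n : ℕ}
    (hn : n + 1 < Lpt β x) : digLeft β x (n + 1) = dig β x (n + 1) :=
  digLeft_succ_eq_dig_succ (iterate_tauLeft_eq_of_lt_Lpt hβ hx0 hx1 (by omega))
    (iterate_tauLeft_eq_of_lt_Lpt hβ hx0 hx1 hn)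

lemma digLeft_Lpt (hβ : 0 < β) {x : ℝ} (hx0 : 0 < x) (hx1 : x ≤ 1) (hs : IsSimplePt β x) :
    digLeft β x (Lpt β x) = dig β x (Lpt β x) - 1 := by
  obtain ⟨hL, -⟩ := Lpt_spec hs
  obtain ⟨htl, htau⟩ := iterate_Lpt hβ hx0 hx1 hs
  have h := iterate_tauLeft_eq_of_lt_Lpt hβ hx0 hx1 (Nat.sub_lt hL one_pos)
  rw [← Nat.sub_add_cancel hL] at htl htau ⊢
  have : (digLeft β x (Lpt β x - 1 + 1) : ℝ) = dig β x (Lpt β x - 1 + 1) - 1 := by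
    rw [digLeft_succ_eq, dig_succ_eq, h, htl, htau]
    ring
  exact_mod_cast this

lemma dig_eq_zero_of_Lpt_lt (hβ : 0 < β) {x : ℝ} (hx0 : 0 < x) (hx1 : x ≤ 1)
    (hs : IsSimplePt β x) {n : ℕ} (hn : Lpt β x < n) : dig β x n = 0 := by
  have h : (tau β)^[n - 1] x = 0 := by
    rw [← Nat.sub_add_cancel (show Lpt β x ≤ n - 1 by omega), Function.iterate_add_apply,
      (iterate_Lpt hβ hx0 hx1 hs).2]
    exact Function.iterate_fixed (by simp [tau]) _
  simp [dig, h]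

lemma digLeft_add_Lpt (hβ : 0 < β) {x : ℝ} (hx0 : 0 < x) (hx1 : x ≤ 1) (hs : IsSimplePt β x)
    (n : ℕ) : digLeft β x (n + 1 + Lpt β x) = digLeft β 1 (n + 1) := by
  simp only [digLeft, show n + 1 + Lpt β x - 1 = n + Lpt β x by omega, Nat.add_sub_cancel,
    Function.iterate_add_apply, (iterate_Lpt hβ hx0 hx1 hs).1]

theorem digitSeries_digLeft_sub_dig (hβ : 0 < β) {z : ℂ} (hz : 1 < ‖z‖) {x : ℝ} (hx0 : 0 < x)
    (hx1 : x ≤ 1) (hs : IsSimplePt β x) :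
    digitSeries z (digLeft β x) - digitSeries z (dig β x)
      = (digitSeries z (digLeft β 1) - 1) / z ^ Lpt β x := by
  obtain ⟨hL, -⟩ := Lpt_spec hs
  have hhead : ∑ n ∈ Finset.range (Lpt β x), (digLeft β x (n + 1) : ℂ) / z ^ (n + 1)
      = ∑ n ∈ Finset.range (Lpt β x), (dig β x (n + 1) : ℂ) / z ^ (n + 1) - 1 / z ^ Lpt β x := by
    obtain ⟨j, hj⟩ : ∃ j, Lpt β x = j + 1 := ⟨_, (Nat.sub_add_cancel hL).symm⟩
    have hlast := digLeft_Lpt hβ hx0 hx1 hs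
    rw [hj] at hlast ⊢
    rw [Finset.sum_range_succ, Finset.sum_range_succ, hlast, Finset.sum_congr rfl fun n hn =>
      by rw [digLeft_eq_dig_of_lt_Lpt hβ hx0 hx1 (by simp at hn; omega)]]
    push_cast
    ring
  have htail_left : digitSeries z (fun n => digLeft β x (n + Lpt β x))
      = digitSeries z (digLeft β 1) :=
    tsum_congr fun n => by dsimp only; rw [digLeft_add_Lpt hβ hx0 hx1 hs]
  have htail : digitSeries z (fun n => dig β x (n + Lpt β x)) = 0 := by
    simp [digitSeries, dig_eq_zero_of_Lpt_lt hβ hx0 hx1 hs]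
  rw [digitSeries_eq_sum_add hz (norm_digLeft_le hβ hx0 hx1) (Lpt β x),
    digitSeries_eq_sum_add hz (norm_dig_le hβ.le hx0.le hx1) (Lpt β x), hhead, htail_left, htail]
  ring

end SimplePoints

lemma digitSeries_digLeft_one_eq_one_iff {β : ℝ} (hβ : 0 < β) {z : ℂ} (hz : 1 < ‖z‖) :
    digitSeries z (digLeft β 1) = 1 ↔ digitSeries z (dig β 1) = 1 := by
  by_cases hs : IsSimplePt β 1
  · have h := digitSeries_digLeft_sub_dig hβ hz one_pos le_rfl hs
    have hpow : 1 < ‖z ^ Lpt β 1‖ := by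
      rw [norm_pow]; exact one_lt_pow₀ hz (by have := (Lpt_spec hs).1; omega)
    have hpow0 : z ^ Lpt β 1 ≠ 0 := norm_pos_iff.1 (one_pos.trans hpow)
    have hpow1 : z ^ Lpt β 1 - 1 ≠ 0 := sub_ne_zero.2 fun h1 => by simp [h1] at hpow
    constructor
    · intro h1
      rw [h1, sub_self, zero_div, sub_eq_zero] at h
      exact h.symm
    · intro h1
      rw [h1, eq_div_iff hpow0] at h
      have : (digitSeries z (digLeft β 1) - 1) * (z ^ Lpt β 1 - 1) = 0 := by linear_combination h
      exact sub_eq_zero.1 ((mul_eq_zero.1 this).resolve_right hpow1)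
  · rw [digitSeries_digLeft_of_not_isSimplePt hβ one_pos le_rfl hs]

lemma tendsto_Ffun_nhdsWithin_Ico_iff {β : ℝ} (hβ : 0 < β) {lam : ℂ} (hz : 1 < ‖(β : ℂ) * lam‖)
    {x : ℝ} (hx0 : 0 < x) (hx1 : x ≤ 1) :
    Tendsto (Ffun β lam) (𝓝[Ico 0 x] x) (𝓝 (Ffun β lam x)) ↔
      digitSeries (β * lam) (digLeft β x) = digitSeries (β * lam) (dig β x) := by
  rw [nhdsWithin_Ico_eq_nhdsLT hx0]
  have h := tendsto_digitSeries_dig_nhdsLT hβ hz hx0 hx1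
  exact ⟨tendsto_nhds_unique h, fun e => by rw [e] at h; exact h⟩

theorem stmt16_general (β : ℝ) (hβ : 1 < β) (lam : ℂ)
    (h1 : 1 / β < ‖lam‖) :
    (∀ x ∈ Set.Ioc (0 : ℝ) 1, IsSimplePt β x →
      Filter.Tendsto (Ffun β lam) (nhdsWithin x (Set.Ico 0 x)) (nhds (Ffun β lam x))) ↔
    (∑' n : ℕ, (dig β 1 (n + 1) : ℂ) / ((β : ℂ) * lam) ^ (n + 1)) = 1 := by
  have hβ0 : 0 < β := one_pos.trans hβ
  have hz : 1 < ‖(β : ℂ) * lam‖ := by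
    rwa [norm_mul, Complex.norm_real, Real.norm_of_nonneg hβ0.le, ← div_lt_iff₀' hβ0]
  have hz0 : (β : ℂ) * lam ≠ 0 := norm_pos_iff.1 (one_pos.trans hz)
  change _ ↔ digitSeries (β * lam) (dig β 1) = 1
  rw [← digitSeries_digLeft_one_eq_one_iff hβ0 hz]
  constructor
  · intro h
    have hx0 : 0 < 1 / β := by positivity
    have hx1 : 1 / β ≤ 1 := (div_le_one hβ0).2 hβ.le
    have hs : IsSimplePt β (1 / β) :=
      ⟨1, le_rfl, 1, le_rfl, Int.le_floor.2 (by simpa using hβ.le), by simp⟩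
    have hdiff := digitSeries_digLeft_sub_dig hβ0 hz hx0 hx1 hs
    rw [(tendsto_Ffun_nhdsWithin_Ico_iff hβ0 hz hx0 hx1).1 (h _ ⟨hx0, hx1⟩ hs), sub_self,
      eq_comm, div_eq_zero_iff] at hdiff
    exact sub_eq_zero.1 (hdiff.resolve_right (pow_ne_zero _ hz0))
  · intro h x hx hs
    rw [tendsto_Ffun_nhdsWithin_Ico_iff hβ0 hz hx.1 hx.2, ← sub_eq_zero,
      digitSeries_digLeft_sub_dig hβ0 hz hx.1 hx.2 hs, h, sub_self, zero_div]

theorem stmt16 (β : ℝ) (hβ : 1 < β) (lam : ℂ)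
    (h1 : 1 / β < ‖lam‖) (h2 : ‖lam‖ ≤ 1) :
    (∀ x ∈ Set.Ioc (0 : ℝ) 1, IsSimplePt β x →
      Filter.Tendsto (Ffun β lam) (nhdsWithin x (Set.Ico 0 x)) (nhds (Ffun β lam x))) ↔
    (∑' n : ℕ, (dig β 1 (n + 1) : ℂ) / ((β : ℂ) * lam) ^ (n + 1)) = 1 :=
  stmt16_general β hβ lam h1
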